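/- (Theorem 1, optimality of the label tokenizer.) Suppose M(x₁,x₂) > 0 implies y₁(x₁) = y₂(x₂). Then for every partition S of X₂ (with all blocks of positive mass) whose mask-induced error vanishes, α(S) = 0, one has ‖Ā_S‖_F² ≥ ‖Ā_{S^y}‖_F². Consequently, for any constants c₁, c₂ > 0, the label partition S^y minimizes the downstream error bound quantity c₁·‖Ā_S‖_F² + c₂·α(S) over all such partitions S. -/

import Mathlib

/-!
If `α(S) = 0`, then `A_S` vanishes between different classes of `y₁`; since its rows sum to the
marginal `w`, its entries over `C × C` sum to `w(C)` for each class `C`. Cauchy–Schwarz in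
Sedrakyan's form with the weights `w(x) w(x')`, whose sum over `C × C` is `w(C)²`, then gives
`∑_{C × C} Ā_S² ≥ w(C)² / w(C)² = 1`, so `‖Ā_S‖_F²` is at least the number of labels taken by `y₁`.
When `M` is compatible with the labels, `A_{S^y}(x, x') = w(x) w(x') / w(C)` on each class, and
the bound is attained.
-/

open Finset

/-- The augmentation weight induced by masked image modeling with discrete
tokenization given by a partition `S` of `X₂`. -/
noncomputable def augWeight {X₁ X₂ : Type*} [Fintype X₁] [Fintype X₂] [DecidableEq X₂]
    (M : X₁ → X₂ → ℝ) (S : Finpartition (univ : Finset X₂)) (x₁ x₁' : X₁) : ℝ :=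
  ∑ p ∈ S.parts,
    (∑ x₂ ∈ p, M x₁ x₂) * (∑ x₂ ∈ p, M x₁' x₂) / (∑ x, ∑ x₂ ∈ p, M x x₂)

/-- The normalized adjacency matrix
`Ā_S(x₁,x₁') = A_S(x₁,x₁') / √(w(x₁) · w(x₁'))` with `w(x₁) = Σ_{x₂} M(x₁,x₂)`. -/
noncomputable def normAdj {X₁ X₂ : Type*} [Fintype X₁] [Fintype X₂] [DecidableEq X₂]
    (M : X₁ → X₂ → ℝ) (S : Finpartition (univ : Finset X₂)) (x₁ x₁' : X₁) : ℝ :=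
  augWeight M S x₁ x₁' / Real.sqrt ((∑ x₂, M x₁ x₂) * (∑ x₂, M x₁' x₂))

/-- The squared Frobenius norm `‖Ā_S‖_F²`, which equals the sum of squared
eigenvalues `Σᵢ λᵢ²` of the symmetric matrix `Ā_S`. -/
noncomputable def frobSq {X₁ X₂ : Type*} [Fintype X₁] [Fintype X₂] [DecidableEq X₂]
    (M : X₁ → X₂ → ℝ) (S : Finpartition (univ : Finset X₂)) : ℝ :=
  ∑ x₁, ∑ x₁', (normAdj M S x₁ x₁') ^ 2

/-- The mask-induced error `α(S) = Σ_{(x₁,x₁') : y₁(x₁) ≠ y₁(x₁')} A_S(x₁, x₁')`. -/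
noncomputable def maskError {X₁ X₂ Y : Type*} [Fintype X₁] [Fintype X₂] [DecidableEq X₂]
    [DecidableEq Y] (M : X₁ → X₂ → ℝ) (S : Finpartition (univ : Finset X₂))
    (y₁ : X₁ → Y) : ℝ :=
  ∑ x₁, ∑ x₁', if y₁ x₁ ≠ y₁ x₁' then augWeight M S x₁ x₁' else 0

/-- The label partition `S^y`: the partition of `X₂` into the fibers of `y₂`. -/
def labelPartition {X₂ Y : Type*} [Fintype X₂] [DecidableEq X₂] [DecidableEq Y]
    (y₂ : X₂ → Y) : Finpartition (univ : Finset X₂) :=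
  haveI : DecidableRel (Setoid.ker y₂).r := fun a b => inferInstanceAs (Decidable (y₂ a = y₂ b))
  Finpartition.ofSetoid (Setoid.ker y₂)

namespace Finpartition

theorem sum_sum_parts {α β : Type*} [DecidableEq α] [AddCommMonoid β] {s : Finset α}
    (P : Finpartition s) (f : α → β) : ∑ p ∈ P.parts, ∑ i ∈ p, f i = ∑ i ∈ s, f i := by
  conv_rhs => rw [← P.biUnion_parts]
  exact (sum_biUnion P.disjoint).symm

end Finpartition

theorem Finset.sum_div_sum_fiber_eq_card_image {ι κ : Type*} [Fintype ι] [DecidableEq κ]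
    {w : ι → ℝ} (hw : ∀ i, 0 < w i) (g : ι → κ) :
    ∑ i, w i / ∑ j ∈ {j | g j = g i}, w j = #(univ.image g) := by
  rw [← sum_fiberwise_of_maps_to (t := univ.image g) (fun i _ => mem_image_of_mem g (mem_univ i))]
  simp only [card_eq_sum_ones, Nat.cast_sum, Nat.cast_one]
  refine sum_congr rfl fun c hc => ?_
  obtain ⟨i₀, -, rfl⟩ := mem_image.mp hc
  have hpos : 0 < ∑ j ∈ {j | g j = g i₀}, w j :=
    sum_pos (fun j _ => hw j) ⟨i₀, mem_filter.mpr ⟨mem_univ _, rfl⟩⟩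
  calc ∑ i ∈ {i | g i = g i₀}, w i / ∑ j ∈ {j | g j = g i}, w j
      = ∑ i ∈ {i | g i = g i₀}, w i / ∑ j ∈ {j | g j = g i₀}, w j :=
        sum_congr rfl fun i hi => by rw [(mem_filter.mp hi).2]
    _ = 1 := by rw [← sum_div, div_self hpos.ne']

section AugWeight

variable {X₁ X₂ : Type*} [Fintype X₁] [Fintype X₂] [DecidableEq X₂] {M : X₁ → X₂ → ℝ}

theorem augWeight_nonneg (hM : ∀ x₁ x₂, 0 ≤ M x₁ x₂) (S : Finpartition (univ : Finset X₂))
    (x x' : X₁) : 0 ≤ augWeight M S x x' :=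
  sum_nonneg fun _ _ => div_nonneg
    (mul_nonneg (sum_nonneg fun _ _ => hM _ _) (sum_nonneg fun _ _ => hM _ _))
    (sum_nonneg fun _ _ => sum_nonneg fun _ _ => hM _ _)

theorem sum_augWeight_right {S : Finpartition (univ : Finset X₂)}
    (hS : ∀ p ∈ S.parts, 0 < ∑ x₁, ∑ x₂ ∈ p, M x₁ x₂) (x : X₁) :
    ∑ x', augWeight M S x x' = ∑ x₂, M x x₂ := by
  unfold augWeight
  rw [sum_comm, ← S.sum_sum_parts]
  refine sum_congr rfl fun p hp => ?_
  rw [← sum_div, ← mul_sum, mul_div_assoc, div_self (hS p hp).ne', mul_one]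

theorem normAdj_sq (hM : ∀ x₁ x₂, 0 ≤ M x₁ x₂) (S : Finpartition (univ : Finset X₂))
    (x x' : X₁) :
    normAdj M S x x' ^ 2 =
      augWeight M S x x' ^ 2 / ((∑ x₂, M x x₂) * ∑ x₂, M x' x₂) := by
  rw [normAdj, div_pow, Real.sq_sqrt]
  exact mul_nonneg (sum_nonneg fun _ _ => hM _ _) (sum_nonneg fun _ _ => hM _ _)

variable {Y : Type*} [DecidableEq Y] {y₁ : X₁ → Y}

theorem augWeight_eq_zero_of_maskError_eq_zero (hM : ∀ x₁ x₂, 0 ≤ M x₁ x₂)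
    {S : Finpartition (univ : Finset X₂)} (hα : maskError M S y₁ = 0) {x x' : X₁}
    (h : y₁ x ≠ y₁ x') : augWeight M S x x' = 0 := by
  have hterm : ∀ x x', 0 ≤ if y₁ x ≠ y₁ x' then augWeight M S x x' else 0 := fun x x' => by
    split_ifs
    exacts [augWeight_nonneg hM S x x', le_rfl]
  have hrow := (sum_eq_zero_iff_of_nonneg fun x _ => sum_nonneg fun x' _ => hterm x x').mp hα x
    (mem_univ x)
  simpa [h] using (sum_eq_zero_iff_of_nonneg fun x' _ => hterm x x').mp hrow x' (mem_univ x')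

theorem sum_sum_augWeight_fiber (hM : ∀ x₁ x₂, 0 ≤ M x₁ x₂)
    {S : Finpartition (univ : Finset X₂)} (hS : ∀ p ∈ S.parts, 0 < ∑ x₁, ∑ x₂ ∈ p, M x₁ x₂)
    (hα : maskError M S y₁ = 0) (c : Y) :
    ∑ x ∈ {x | y₁ x = c}, ∑ x' ∈ {x' | y₁ x' = c}, augWeight M S x x' =
      ∑ x ∈ {x | y₁ x = c}, ∑ x₂, M x x₂ := by
  refine sum_congr rfl fun x hx => ?_
  rw [← sum_augWeight_right hS x]
  refine sum_subset (subset_univ _) fun x' _ hx' => ?_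
  refine augWeight_eq_zero_of_maskError_eq_zero hM hα fun h => hx' ?_
  simpa [← h] using hx

theorem one_le_sum_sum_normAdj_sq_fiber (hM : ∀ x₁ x₂, 0 ≤ M x₁ x₂)
    (hmarg : ∀ x₁, 0 < ∑ x₂, M x₁ x₂) {S : Finpartition (univ : Finset X₂)}
    (hS : ∀ p ∈ S.parts, 0 < ∑ x₁, ∑ x₂ ∈ p, M x₁ x₂) (hα : maskError M S y₁ = 0) {c : Y}
    (hc : c ∈ univ.image y₁) :
    1 ≤ ∑ x ∈ {x | y₁ x = c}, ∑ x' ∈ {x' | y₁ x' = c}, normAdj M S x x' ^ 2 := by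
  set C : Finset X₁ := {x | y₁ x = c}
  set W := ∑ x ∈ C, ∑ x₂, M x x₂
  have hW : 0 < W := by
    obtain ⟨x₀, -, hx₀⟩ := mem_image.mp hc
    exact sum_pos (fun x _ => hmarg x) ⟨x₀, mem_filter.mpr ⟨mem_univ _, hx₀⟩⟩
  have hCS := sq_sum_div_le_sum_sq_div (C ×ˢ C) (fun z => augWeight M S z.1 z.2)
    (g := fun z => (∑ x₂, M z.1 x₂) * ∑ x₂, M z.2 x₂)
    fun z _ => mul_pos (hmarg z.1) (hmarg z.2)
  simp only [sum_product] at hCS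
  rw [sum_sum_augWeight_fiber hM hS hα, ← sum_mul_sum, ← sq, div_self (pow_pos hW 2).ne'] at hCS
  simpa only [normAdj_sq hM] using hCS

theorem card_image_le_frobSq (hM : ∀ x₁ x₂, 0 ≤ M x₁ x₂)
    (hmarg : ∀ x₁, 0 < ∑ x₂, M x₁ x₂) {S : Finpartition (univ : Finset X₂)}
    (hS : ∀ p ∈ S.parts, 0 < ∑ x₁, ∑ x₂ ∈ p, M x₁ x₂) (hα : maskError M S y₁ = 0) :
    (#(univ.image y₁) : ℝ) ≤ frobSq M S := by
  have hmaps : ∀ x ∈ (univ : Finset X₁), y₁ x ∈ univ.image y₁ :=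
    fun x _ => mem_image_of_mem y₁ (mem_univ x)
  calc (#(univ.image y₁) : ℝ)
      = ∑ c ∈ univ.image y₁, 1 := by simp
    _ ≤ ∑ c ∈ univ.image y₁, ∑ x ∈ {x | y₁ x = c}, ∑ x' ∈ {x' | y₁ x' = c},
          normAdj M S x x' ^ 2 :=
        sum_le_sum fun c hc => one_le_sum_sum_normAdj_sq_fiber hM hmarg hS hα hc
    _ = ∑ x, ∑ x' ∈ {x' | y₁ x' = y₁ x}, normAdj M S x x' ^ 2 := by
        rw [← sum_fiberwise_of_maps_to hmaps]
        refine sum_congr rfl fun c _ => sum_congr rfl fun x hx => ?_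
        rw [(mem_filter.mp hx).2]
    _ ≤ frobSq M S :=
        sum_le_sum fun x _ => sum_le_sum_of_subset_of_nonneg (subset_univ _)
          fun _ _ _ => sq_nonneg _

end AugWeight

section LabelPartition

variable {X₁ X₂ Y : Type*} [Fintype X₂] [DecidableEq Y] {M : X₁ → X₂ → ℝ} {y₁ : X₁ → Y}
  {y₂ : X₂ → Y}

theorem sum_fiber_eq_ite (hM : ∀ x₁ x₂, 0 ≤ M x₁ x₂)
    (hcompat : ∀ x₁ x₂, 0 < M x₁ x₂ → y₁ x₁ = y₂ x₂) (x : X₁) (c : Y) :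
    ∑ x₂ ∈ {b | y₂ b = c}, M x x₂ = if y₁ x = c then ∑ x₂, M x x₂ else 0 := by
  rw [sum_filter, ite_sum_zero]
  refine sum_congr rfl fun x₂ _ => ?_
  rcases (hM x x₂).eq_or_lt with h | h
  · simp [← h]
  · simp [hcompat x x₂ h]

variable [DecidableEq X₂]

theorem sum_labelPartition_parts {β : Type*} [AddCommMonoid β] (y₂ : X₂ → Y)
    (f : Finset X₂ → β) :
    ∑ p ∈ (labelPartition y₂).parts, f p = ∑ c ∈ univ.image y₂, f {b | y₂ b = c} := by
  have hparts : (labelPartition y₂).parts =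
      (univ.image y₂).image fun c => ({b | y₂ b = c} : Finset X₂) := by
    rw [image_image]
    exact image_congr fun a _ => filter_congr fun b _ => eq_comm
  rw [hparts, sum_image]
  intro c hc c' _ h
  obtain ⟨b, -, rfl⟩ := mem_image.mp hc
  have hb : b ∈ ({b' | y₂ b' = c'} : Finset X₂) := by
    simp only at h
    simp [← h]
  exact (mem_filter.mp hb).2

variable [Fintype X₁]

theorem augWeight_labelPartition (hM : ∀ x₁ x₂, 0 ≤ M x₁ x₂)
    (hmarg : ∀ x₁, 0 < ∑ x₂, M x₁ x₂) (hcompat : ∀ x₁ x₂, 0 < M x₁ x₂ → y₁ x₁ = y₂ x₂)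
    (x x' : X₁) :
    augWeight M (labelPartition y₂) x x' =
      if y₁ x = y₁ x' then
        (∑ x₂, M x x₂) * (∑ x₂, M x' x₂) / ∑ x'' ∈ {x'' | y₁ x'' = y₁ x}, ∑ x₂, M x'' x₂
      else 0 := by
  have hx : y₁ x ∈ univ.image y₂ := by
    obtain ⟨x₂, -, hx₂⟩ := exists_lt_of_sum_lt (f := fun _ => (0 : ℝ)) (by simpa using hmarg x)
    exact mem_image.mpr ⟨x₂, mem_univ _, (hcompat x x₂ hx₂).symm⟩
  rw [augWeight, sum_labelPartition_parts]
  simp only [sum_fiber_eq_ite hM hcompat, ← sum_filter]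
  rw [sum_eq_single_of_mem _ hx fun c _ hc => by simp [Ne.symm hc]]
  by_cases h : y₁ x = y₁ x' <;> simp [h, eq_comm]

theorem maskError_labelPartition (hM : ∀ x₁ x₂, 0 ≤ M x₁ x₂)
    (hmarg : ∀ x₁, 0 < ∑ x₂, M x₁ x₂) (hcompat : ∀ x₁ x₂, 0 < M x₁ x₂ → y₁ x₁ = y₂ x₂) :
    maskError M (labelPartition y₂) y₁ = 0 :=
  sum_eq_zero fun x _ => sum_eq_zero fun x' _ => by
    rw [augWeight_labelPartition hM hmarg hcompat]
    split_ifs <;> rfl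

theorem frobSq_labelPartition (hM : ∀ x₁ x₂, 0 ≤ M x₁ x₂)
    (hmarg : ∀ x₁, 0 < ∑ x₂, M x₁ x₂) (hcompat : ∀ x₁ x₂, 0 < M x₁ x₂ → y₁ x₁ = y₂ x₂) :
    frobSq M (labelPartition y₂) = #(univ.image y₁) := by
  rw [← sum_div_sum_fiber_eq_card_image hmarg y₁, frobSq]
  refine sum_congr rfl fun x _ => ?_
  set W := ∑ x'' ∈ {x'' | y₁ x'' = y₁ x}, ∑ x₂, M x'' x₂
  have hW : 0 < W := sum_pos (fun x'' _ => hmarg x'') ⟨x, mem_filter.mpr ⟨mem_univ _, rfl⟩⟩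
  calc ∑ x', normAdj M (labelPartition y₂) x x' ^ 2
      = ∑ x' ∈ {x' | y₁ x' = y₁ x}, (∑ x₂, M x x₂) / W ^ 2 * ∑ x₂, M x' x₂ := by
        rw [sum_filter]
        refine sum_congr rfl fun x' _ => ?_
        rw [normAdj_sq hM, augWeight_labelPartition hM hmarg hcompat]
        by_cases h : y₁ x = y₁ x'
        · have hwx := (hmarg x).ne'
          have hwx' := (hmarg x').ne'
          rw [if_pos h, if_pos h.symm]
          change ((∑ x₂, M x x₂) * (∑ x₂, M x' x₂) / W) ^ 2 / _ = _
          field_simp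
        · simp [h, Ne.symm h]
    _ = (∑ x₂, M x x₂) / W := by
        rw [← mul_sum, div_mul_eq_mul_div, sq, mul_div_mul_right _ _ hW.ne']

end LabelPartition

theorem labelPartition_optimal_general {X₁ X₂ Y : Type*} [Fintype X₁] [Fintype X₂]
    [DecidableEq X₂] [DecidableEq Y]
    (M : X₁ → X₂ → ℝ)
    (hM : ∀ x₁ x₂, 0 ≤ M x₁ x₂)
    (hmarg : ∀ x₁, 0 < ∑ x₂, M x₁ x₂)
    (y₁ : X₁ → Y) (y₂ : X₂ → Y)
    (hcompat : ∀ x₁ x₂, 0 < M x₁ x₂ → y₁ x₁ = y₂ x₂) :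
    (∀ S : Finpartition (univ : Finset X₂),
        (∀ p ∈ S.parts, 0 < ∑ x₁, ∑ x₂ ∈ p, M x₁ x₂) →
        maskError M S y₁ = 0 →
        frobSq M (labelPartition y₂) ≤ frobSq M S) ∧
    (∀ c₁ c₂ : ℝ, 0 < c₁ → 0 < c₂ →
      ∀ S : Finpartition (univ : Finset X₂),
        (∀ p ∈ S.parts, 0 < ∑ x₁, ∑ x₂ ∈ p, M x₁ x₂) →
        maskError M S y₁ = 0 →
        c₁ * frobSq M (labelPartition y₂) + c₂ * maskError M (labelPartition y₂) y₁ ≤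
          c₁ * frobSq M S + c₂ * maskError M S y₁) := by
  have hopt : ∀ S : Finpartition (univ : Finset X₂),
      (∀ p ∈ S.parts, 0 < ∑ x₁, ∑ x₂ ∈ p, M x₁ x₂) → maskError M S y₁ = 0 →
      frobSq M (labelPartition y₂) ≤ frobSq M S := fun S hS hα => by
    rw [frobSq_labelPartition hM hmarg hcompat]
    exact card_image_le_frobSq hM hmarg hS hα
  refine ⟨hopt, fun c₁ c₂ hc₁ _ S hS hα => ?_⟩
  rw [maskError_labelPartition hM hmarg hcompat, hα]
  simpa using mul_le_mul_of_nonneg_left (hopt S hS hα) hc₁.le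

/-- **Theorem 1 (optimality of the label tokenizer).**  Suppose `M(x₁,x₂) > 0`
implies `y₁(x₁) = y₂(x₂)`.  Then every partition `S` of `X₂` (with all blocks of
positive mass) whose mask-induced error vanishes satisfies
`‖Ā_S‖_F² ≥ ‖Ā_{S^y}‖_F²`.  Consequently, for any constants `c₁, c₂ > 0`, the label
partition `S^y` minimizes `c₁·‖Ā_S‖_F² + c₂·α(S)` over all such partitions `S`. -/
theorem labelPartition_optimal {X₁ X₂ Y : Type*} [Fintype X₁] [Fintype X₂] [Fintype Y]
    [DecidableEq X₂] [DecidableEq Y]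
    (M : X₁ → X₂ → ℝ)
    (hM : ∀ x₁ x₂, 0 ≤ M x₁ x₂)
    (hsum : ∑ x₁, ∑ x₂, M x₁ x₂ = 1)
    (hmarg : ∀ x₁, 0 < ∑ x₂, M x₁ x₂)
    (y₁ : X₁ → Y) (y₂ : X₂ → Y)
    (hcompat : ∀ x₁ x₂, 0 < M x₁ x₂ → y₁ x₁ = y₂ x₂)
    (hwy : ∀ p ∈ (labelPartition y₂).parts, 0 < ∑ x₁, ∑ x₂ ∈ p, M x₁ x₂) :
    (∀ S : Finpartition (univ : Finset X₂),
        (∀ p ∈ S.parts, 0 < ∑ x₁, ∑ x₂ ∈ p, M x₁ x₂) →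
        maskError M S y₁ = 0 →
        frobSq M (labelPartition y₂) ≤ frobSq M S) ∧
    (∀ c₁ c₂ : ℝ, 0 < c₁ → 0 < c₂ →
      ∀ S : Finpartition (univ : Finset X₂),
        (∀ p ∈ S.parts, 0 < ∑ x₁, ∑ x₂ ∈ p, M x₁ x₂) →
        maskError M S y₁ = 0 →
        c₁ * frobSq M (labelPartition y₂) + c₂ * maskError M (labelPartition y₂) y₁ ≤
          c₁ * frobSq M S + c₂ * maskError M S y₁) :=
  labelPartition_optimal_general M hM hmarg y₁ y₂ hcompat
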